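/- arXiv:2008.08541 — 2 statements merged into one kernel-verified Lean document; each statement's English description precedes it below -/
import Mathlib

section
/- Let G be a finite simple graph on n vertices. Then there exists an ordering v_1, …, v_n of the vertices such that, setting G_0 = G and G_k = G_{k−1} − v_k, one has ν(G_k) = ν(G) − k for all k < ν(G), and ν(G_k) = 0 for all k ≥ ν(G) (with ν of the empty graph defined to be 0). -/
open scoped Classical

/-- Closed adjacency matrix of a simple graph over GF(2): entry (i,j) is 1 iff i = j or i ~ j. -/
noncomputable def closedAdj {V : Type*} [Fintype V] (G : SimpleGraph V) :
    Matrix V V (ZMod 2) :=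
  Matrix.of fun i j => if i = j ∨ G.Adj i j then 1 else 0

/-- Nullity ν(G): dimension over GF(2) of the kernel of the closed adjacency matrix. -/
noncomputable def nu {V : Type*} [Fintype V] (G : SimpleGraph V) : ℕ :=
  Module.finrank (ZMod 2) (LinearMap.ker (closedAdj G).mulVecLin)

/-!
If some kernel vector `x` of a symmetric matrix `M` has `x v ≠ 0`, deleting `v` lowers the
nullity by exactly one: extension by zero identifies the kernel of `M - v` with the hyperplane
`{y ∈ ker M | y v = 0}` of `ker M`, the equation of `M y = 0` at `v` being automatic because
`x ⬝ᵥ M y = (M x) ⬝ᵥ y = 0`. So while `ν > 0` a vertex can always be deleted at a cost of one.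
Once `ν = 0`, some vertex can be deleted keeping `M` invertible: otherwise every `M - v` is
singular, which forces `M⁻¹ v v = 0` for all `v`; a symmetric matrix with zero diagonal over a
field of characteristic two is alternating, yet the quadratic form of `M⁻¹` at the column
`M eᵢ` is `M i i = 1`. Deleting vertices greedily yields the ordering.
-/

open Matrix

theorem Submodule.finrank_comap_of_injective {K V W : Type*} [Field K] [AddCommGroup V]
    [Module K V] [AddCommGroup W] [Module K W] {g : V →ₗ[K] W} (hg : Function.Injective g)
    (p : Submodule K W) :
    Module.finrank K (p.comap g) = Module.finrank K ↥(LinearMap.range g ⊓ p) := by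
  rw [← Submodule.map_comap_eq]
  exact (Submodule.equivMapOfInjective g hg _).finrank_eq

theorem Submodule.finrank_inf_ker_proj_add_one {K ι : Type*} [Field K] [Fintype ι]
    {W : Submodule K (ι → K)} {x : ι → K} (hx : x ∈ W) {v : ι} (hxv : x v ≠ 0) :
    Module.finrank K ↥(W ⊓ LinearMap.ker (LinearMap.proj v)) + 1 = Module.finrank K W := by
  let f : Module.Dual K W := (LinearMap.proj v).comp W.subtype
  have hf : f ≠ 0 := fun h => hxv (LinearMap.congr_fun h ⟨x, hx⟩)
  rw [← Module.Dual.finrank_ker_add_one_of_ne_zero hf, LinearMap.ker_comp,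
    Submodule.finrank_comap_of_injective W.injective_subtype, Submodule.range_subtype]

theorem Function.ExtendByZero.range_linearMap_compl_singleton (K : Type*) {ι : Type*} [Field K]
    (v : ι) :
    LinearMap.range (Function.ExtendByZero.linearMap K ((↑) : ({v}ᶜ : Set ι) → ι)) =
      LinearMap.ker (LinearMap.proj v) := by
  ext y
  simp only [LinearMap.mem_range, LinearMap.mem_ker, LinearMap.proj_apply]
  constructor
  · rintro ⟨z, rfl⟩
    exact Function.extend_apply' _ _ _ fun ⟨k, hk⟩ => k.2 hk
  · intro hy
    refine ⟨fun k => y k, funext fun i => ?_⟩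
    change Function.extend ((↑) : ({v}ᶜ : Set ι) → ι) (fun k => y k) 0 i = y i
    by_cases hi : i = v
    · subst hi
      rw [hy]
      exact Function.extend_apply' _ _ _ fun ⟨k, hk⟩ => k.2 hk
    · exact Subtype.val_injective.extend_apply _ _ (⟨i, hi⟩ : ({v}ᶜ : Set ι))

namespace Matrix

variable {K ι : Type*} [Field K] [Fintype ι]

noncomputable def nullity (M : Matrix ι ι K) : ℕ :=
  Module.finrank K (LinearMap.ker M.mulVecLin)

abbrev principalSubmatrix (M : Matrix ι ι K) (S : Set ι) : Matrix S S K :=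
  M.submatrix (↑) (↑)

theorem nullity_add_rank (M : Matrix ι ι K) : M.nullity + M.rank = Fintype.card ι := by
  rw [nullity, rank, add_comm, LinearMap.finrank_range_add_finrank_ker,
    Module.finrank_fintype_fun_eq_card]

theorem nullity_submatrix_equiv {κ : Type*} [Fintype κ] (M : Matrix ι ι K) (e : κ ≃ ι) :
    (M.submatrix e e).nullity = M.nullity := by
  have h₁ := (M.submatrix e e).nullity_add_rank
  have h₂ := M.nullity_add_rank
  rw [rank_submatrix, Fintype.card_congr e] at h₁
  omega

theorem nullity_principalSubmatrix_univ (M : Matrix ι ι K) [Fintype (Set.univ : Set ι)] :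
    (M.principalSubmatrix Set.univ).nullity = M.nullity :=
  M.nullity_submatrix_equiv (Equiv.Set.univ ι)

theorem nullity_eq_zero_iff_det_ne_zero [DecidableEq ι] (M : Matrix ι ι K) :
    M.nullity = 0 ↔ M.det ≠ 0 := by
  rw [nullity, Submodule.finrank_eq_zero, ker_mulVecLin_eq_bot_iff, ne_eq,
    ← exists_mulVec_eq_zero_iff]
  push Not
  exact forall_congr' fun _ => not_imp_not.symm

theorem principalSubmatrix_mulVec_apply (M : Matrix ι ι K) {S : Set ι} [Fintype S] (z : S → K)
    (i : S) :
    (M.principalSubmatrix S *ᵥ z) i = (M *ᵥ Function.extend (↑) z 0) i := by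
  have h_out (j : ι) (hj : j ∉ S) : Function.extend ((↑) : S → ι) z 0 j = 0 :=
    Function.extend_apply' _ _ _ fun ⟨k, hk⟩ => hj (hk ▸ k.2)
  simp only [mulVec, dotProduct, submatrix_apply]
  rw [← Fintype.sum_subtype_add_sum_subtype (· ∈ S),
    Fintype.sum_eq_zero (fun j : {j // j ∉ S} => _) fun j => by rw [h_out j j.2, mul_zero],
    add_zero]
  simp only [Subtype.val_injective.extend_apply]
  convert rfl

theorem mulVec_extend_eq_single [DecidableEq ι] {M : Matrix ι ι K} {v : ι}
    {z : ({v}ᶜ : Set ι) → K} (hz : M.principalSubmatrix {v}ᶜ *ᵥ z = 0) :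
    M *ᵥ Function.extend (↑) z 0 = Pi.single v ((M *ᵥ Function.extend (↑) z 0) v) := by
  funext i
  by_cases hi : i = v
  · subst hi
    rw [Pi.single_eq_same]
  · rw [Pi.single_eq_of_ne hi, ← principalSubmatrix_mulVec_apply M z (⟨i, hi⟩ : ({v}ᶜ : Set ι)),
      hz, Pi.zero_apply]

theorem ker_principalSubmatrix_compl_singleton [DecidableEq ι] {M : Matrix ι ι K} (hM : Mᵀ = M)
    {x : ι → K} (hx : M *ᵥ x = 0) {v : ι} (hxv : x v ≠ 0) :
    LinearMap.ker (M.principalSubmatrix {v}ᶜ).mulVecLin =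
      (LinearMap.ker M.mulVecLin).comap (Function.ExtendByZero.linearMap K (↑)) := by
  ext z
  change M.principalSubmatrix {v}ᶜ *ᵥ z = 0 ↔ M *ᵥ Function.extend (↑) z 0 = 0
  constructor
  · intro hz
    have h_single := mulVec_extend_eq_single hz
    have h_at_v : x v * (M *ᵥ Function.extend (↑) z 0) v = 0 := by
      rw [← dotProduct_single, ← h_single, dotProduct_mulVec, ← mulVec_transpose, hM, hx,
        zero_dotProduct]
    rw [h_single, (mul_eq_zero.mp h_at_v).resolve_left hxv, Pi.single_zero]
  · intro hz
    funext i
    rw [principalSubmatrix_mulVec_apply, hz, Pi.zero_apply, Pi.zero_apply]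

theorem nullity_principalSubmatrix_compl_singleton_add_one [DecidableEq ι] {M : Matrix ι ι K}
    (hM : Mᵀ = M) {x : ι → K} (hx : M *ᵥ x = 0) {v : ι} (hxv : x v ≠ 0) :
    (M.principalSubmatrix {v}ᶜ).nullity + 1 = M.nullity := by
  rw [nullity, ker_principalSubmatrix_compl_singleton hM hx hxv,
    Submodule.finrank_comap_of_injective, Function.ExtendByZero.range_linearMap_compl_singleton,
    inf_comm]
  · exact Submodule.finrank_inf_ker_proj_add_one hx hxv
  · exact Function.extend_injective Subtype.val_injective (0 : ι → K)

theorem dotProduct_mulVec_self_eq_zero {R n : Type*} [CommRing R] [CharP R 2] [Fintype n]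
    {A : Matrix n n R} (hA : Aᵀ = A) (hdiag : ∀ i, A i i = 0) (x : n → R) :
    x ⬝ᵥ A *ᵥ x = 0 := by
  have h_pairs : x ⬝ᵥ A *ᵥ x = ∑ p : n × n, x p.1 * A p.1 p.2 * x p.2 := by
    simp only [dotProduct, mulVec, Finset.mul_sum, Fintype.sum_prod_type, mul_assoc]
  rw [h_pairs]
  refine Finset.sum_involution (fun p _ => p.swap) (fun p _ => ?_) (fun p _ hp => ?_)
    (fun _ _ => Finset.mem_univ _) (fun p _ => p.swap_swap)
  · have h_symm : A p.2 p.1 = A p.1 p.2 := by rw [← transpose_apply A, hA]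
    rw [Prod.fst_swap, Prod.snd_swap, h_symm,
      show x p.2 * A p.1 p.2 * x p.1 = x p.1 * A p.1 p.2 * x p.2 by ring]
    exact CharTwo.add_self_eq_zero _
  · intro h
    rw [show p.2 = p.1 from congrArg Prod.fst h, hdiag, mul_zero, zero_mul] at hp
    exact hp rfl

theorem inv_apply_self_eq_zero_of_det_principalSubmatrix_eq_zero [DecidableEq ι]
    {M : Matrix ι ι K} (hM : M.det ≠ 0) {v : ι} (hv : (M.principalSubmatrix {v}ᶜ).det = 0) :
    M⁻¹ v v = 0 := by
  obtain ⟨z, hz0, hz⟩ := exists_mulVec_eq_zero_iff.mpr hv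
  set y := Function.extend ((↑) : ({v}ᶜ : Set ι) → ι) z 0 with hy_def
  have hy0 : y ≠ 0 := by
    obtain ⟨k, hk⟩ := Function.ne_iff.mp hz0
    exact Function.ne_iff.mpr ⟨k, by rwa [hy_def, Subtype.val_injective.extend_apply]⟩
  -- `M y` vanishes off `v`, so `y` is a multiple of the `v`-th column of `M⁻¹`
  have hy : y = M⁻¹ *ᵥ Pi.single v ((M *ᵥ y) v) := by
    rw [← mulVec_extend_eq_single hz, mulVec_mulVec, nonsing_inv_mul _ hM.isUnit, one_mulVec]
  have hc : (M *ᵥ y) v ≠ 0 := by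
    intro hc
    rw [hc, Pi.single_zero, mulVec_zero] at hy
    exact hy0 hy
  have hyv : y v = 0 := Function.extend_apply' _ _ _ fun ⟨k, hk⟩ => k.2 hk
  rw [hy, mulVec_single] at hyv
  exact (mul_eq_zero.mp hyv).resolve_right hc

theorem exists_det_principalSubmatrix_compl_singleton_ne_zero [DecidableEq ι] [CharP K 2]
    {M : Matrix ι ι K} (hM : Mᵀ = M) (hdet : M.det ≠ 0) {i : ι} (hi : M i i ≠ 0) :
    ∃ v, (M.principalSubmatrix {v}ᶜ).det ≠ 0 := by
  by_contra! h
  have h_symm : M⁻¹ᵀ = M⁻¹ := by rw [transpose_nonsing_inv, hM]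
  have key := dotProduct_mulVec_self_eq_zero h_symm
    (fun v => inv_apply_self_eq_zero_of_det_principalSubmatrix_eq_zero hdet (h v))
    (M *ᵥ Pi.single i 1)
  rw [mulVec_mulVec, nonsing_inv_mul _ hdet.isUnit, one_mulVec, dotProduct_single, mul_one,
    mulVec_single_one, col_apply] at key
  exact hi key

theorem exists_nullity_principalSubmatrix_compl_singleton [DecidableEq ι] [CharP K 2]
    {M : Matrix ι ι K} (hM : Mᵀ = M) {i : ι} (hi : M i i ≠ 0) :
    ∃ v, (M.principalSubmatrix {v}ᶜ).nullity = M.nullity - 1 := by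
  by_cases h0 : M.nullity = 0
  · obtain ⟨v, hv⟩ := exists_det_principalSubmatrix_compl_singleton_ne_zero hM
      ((nullity_eq_zero_iff_det_ne_zero M).mp h0) hi
    refine ⟨v, ?_⟩
    rw [h0]
    exact (nullity_eq_zero_iff_det_ne_zero _).mpr hv
  · obtain ⟨x, hx0, hx⟩ := exists_mulVec_eq_zero_iff.mpr
      (not_not.mp (mt (nullity_eq_zero_iff_det_ne_zero M).mpr h0))
    obtain ⟨v, hxv⟩ := Function.ne_iff.mp hx0
    have := nullity_principalSubmatrix_compl_singleton_add_one hM hx hxv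
    exact ⟨v, by omega⟩

theorem exists_nullity_principalSubmatrix_diff_singleton [DecidableEq ι] [CharP K 2]
    {M : Matrix ι ι K} (hM : Mᵀ = M) (hdiag : ∀ i, M i i ≠ 0) {S : Set ι} (hS : S.Nonempty) :
    ∃ v ∈ S, (M.principalSubmatrix (S \ {v})).nullity = (M.principalSubmatrix S).nullity - 1 := by
  obtain ⟨i, hi⟩ := hS
  have hMS : (M.principalSubmatrix S)ᵀ = M.principalSubmatrix S := by
    rw [transpose_submatrix, hM]
  obtain ⟨v, hv⟩ := exists_nullity_principalSubmatrix_compl_singleton hMS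
    (i := ⟨i, hi⟩) (hdiag i)
  let e : ↥(S \ {↑v}) ≃ ↥({v}ᶜ : Set S) :=
    { toFun := fun x => ⟨⟨x, x.2.1⟩, fun h => x.2.2 (congrArg Subtype.val h)⟩
      invFun := fun w => ⟨w.1.1, w.1.2, fun h => w.2 (Subtype.ext h)⟩
      left_inv := fun _ => rfl
      right_inv := fun _ => rfl }
  refine ⟨v, v.2, ?_⟩
  rw [← hv]
  exact nullity_submatrix_equiv ((M.principalSubmatrix S).principalSubmatrix {v}ᶜ) e

end Matrix

theorem List.Nodup.mem_drop_iff_le_idxOf {α : Type*} [DecidableEq α] {l : List α} (hl : l.Nodup)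
    {a : α} (ha : a ∈ l) (k : ℕ) : a ∈ l.drop k ↔ k ≤ l.idxOf a := by
  rw [← not_lt, ← List.mem_take_iff_idxOf_lt ha]
  rw [← List.take_append_drop k l] at hl ha
  constructor
  · intro hd ht
    exact List.disjoint_of_nodup_append hl ht hd
  · intro ht
    exact (List.mem_append.mp ha).resolve_left ht

theorem List.Nodup.exists_equiv_fin_le_iff_mem_drop {α : Type*} [Fintype α]
    {l : List α} (hl : l.Nodup) (hmem : ∀ x, x ∈ l) :
    ∃ e : Fin (Fintype.card α) ≃ α, ∀ k x, k ≤ (e.symm x : ℕ) ↔ x ∈ l.drop k := by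
  let e₀ := hl.getEquivOfForallMemList _ hmem
  have hlen : l.length = Fintype.card α := by simpa using Fintype.card_congr e₀
  refine ⟨(finCongr hlen.symm).trans e₀, fun k x => ?_⟩
  rw [hl.mem_drop_iff_le_idxOf (hmem x)]
  rfl

theorem exists_list_apply_drop_eq_sub {α : Type*} (φ : Set α → ℕ) (h_empty : φ ∅ = 0)
    (h_step : ∀ S : Set α, S.Nonempty → ∃ v ∈ S, φ (S \ {v}) = φ S - 1) (S : Finset α) :
    ∃ l : List α, l.Nodup ∧ (∀ x, x ∈ l ↔ x ∈ S) ∧ ∀ k, φ {x | x ∈ l.drop k} = φ S - k := by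
  induction S using Finset.strongInduction with
  | H S ih =>
    rcases S.eq_empty_or_nonempty with rfl | hS
    · exact ⟨[], List.nodup_nil, by simp, fun k => by simp [h_empty]⟩
    obtain ⟨v, hv, hφv⟩ := h_step S (by exact_mod_cast hS)
    obtain ⟨l, hnd, hmem, hdrop⟩ := ih (S.erase v) (Finset.erase_ssubset hv)
    have hmem' (x : α) : x ∈ v :: l ↔ x ∈ S := by
      by_cases hx : x = v <;> simp [hmem, hx, Finset.mem_coe.mp hv]
    refine ⟨v :: l, List.nodup_cons.mpr ⟨fun h => by simpa using (hmem v).mp h, hnd⟩, hmem',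
      fun k => ?_⟩
    cases k with
    | zero => simp only [List.drop_zero, hmem', Finset.setOfPred_mem, Nat.sub_zero]
    | succ k => rw [List.drop_succ_cons, hdrop, Finset.coe_erase, hφv]; omega

theorem exists_finEquiv_apply_eq_sub {α : Type*} [Fintype α] (φ : Set α → ℕ) (h_empty : φ ∅ = 0)
    (h_step : ∀ S : Set α, S.Nonempty → ∃ v ∈ S, φ (S \ {v}) = φ S - 1) :
    ∃ e : Fin (Fintype.card α) ≃ α, ∀ k : ℕ,
      φ {x | k ≤ (e.symm x : ℕ)} = φ Set.univ - k := by
  obtain ⟨l, hnd, hmem, hdrop⟩ := exists_list_apply_drop_eq_sub φ h_empty h_step Finset.univ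
  obtain ⟨e, he⟩ := hnd.exists_equiv_fin_le_iff_mem_drop fun x => (hmem x).mpr (Finset.mem_univ x)
  refine ⟨e, fun k => ?_⟩
  simp only [he, hdrop, Finset.coe_univ]

section ClosedAdjacency

variable {V : Type*} [Fintype V]

theorem closedAdj_transpose (G : SimpleGraph V) : (closedAdj G)ᵀ = closedAdj G := by
  ext i j
  simp only [closedAdj, Matrix.transpose_apply, Matrix.of_apply, eq_comm, G.adj_comm]

theorem closedAdj_apply_self (G : SimpleGraph V) (i : V) : closedAdj G i i = 1 := by
  simp [closedAdj]

theorem nu_eq_nullity (G : SimpleGraph V) : nu G = (closedAdj G).nullity := rfl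

theorem nu_induce (G : SimpleGraph V) (S : Set V) [Fintype S] :
    nu (G.induce S) = ((closedAdj G).principalSubmatrix S).nullity := by
  have h : closedAdj (G.induce S) = (closedAdj G).principalSubmatrix S := by
    ext i j
    simp [closedAdj, Subtype.ext_iff]
  rw [nu, h]
  rfl

end ClosedAdjacency

theorem exists_deletion_sequence {V : Type*} [Fintype V] (G : SimpleGraph V) :
    ∃ e : Fin (Fintype.card V) ≃ V, ∀ k : ℕ,
      (k < nu G →
        nu (G.induce {x : V | k ≤ ((e.symm x : Fin (Fintype.card V)) : ℕ)}) = nu G - k) ∧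
      (nu G ≤ k →
        nu (G.induce {x : V | k ≤ ((e.symm x : Fin (Fintype.card V)) : ℕ)}) = 0) := by
  set φ : Set V → ℕ := fun S => ((closedAdj G).principalSubmatrix S).nullity
  have h_step (S : Set V) (hS : S.Nonempty) : ∃ v ∈ S, φ (S \ {v}) = φ S - 1 := by
    obtain ⟨v, hv, h⟩ := Matrix.exists_nullity_principalSubmatrix_diff_singleton
      (closedAdj_transpose G) (fun i => by simp [closedAdj_apply_self]) hS
    -- `convert` reconciles the different `Fintype` instances carried by the subtypes
    exact ⟨v, hv, by convert h⟩
  obtain ⟨e, he⟩ := exists_finEquiv_apply_eq_sub φ Module.finrank_zero_of_subsingleton h_step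
  have h_seq (k : ℕ) :
      nu (G.induce {x : V | k ≤ ((e.symm x : Fin (Fintype.card V)) : ℕ)}) = nu G - k := by
    rw [nu_induce, nu_eq_nullity, ← (closedAdj G).nullity_principalSubmatrix_univ]
    convert he k
  exact ⟨e, fun k => ⟨fun _ => h_seq k, fun hk => by rw [h_seq k]; omega⟩⟩
end

section
/- Let G_1 and G_2 be disjoint finite simple graphs with u ∈ V(G_1), w ∈ V(G_2), and let H = G_1 u w G_2 be the graph obtained by joining u and w with an edge. If u is always-activated in G_1 (every solution of the all-ones configuration on G_1 activates u) and w is always-activated in G_2, then ν(H) = ν(G_1) + ν(G_2) + 1. -/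
open scoped Classical

/-!
If `u` is always activated in `G₁`, then every kernel vector of `N(G₁)` vanishes at `u` (adding it
to an all-ones solution, which exists by Sutner's theorem, gives another one). As `N(G₁)` is
symmetric, its range is the orthogonal of its kernel, so `N(G₁) a = e_u` has a solution, and
`a u = a ⬝ N a = 1 ⬝ a = p ⬝ N a = p u = 1` for an all-ones solution `p`. Likewise `N(G₂) b = e_w`
with `b w = 1`. A vector `(y, z)` lies in the kernel of `N(H)` iff `N(G₁) y = z(w) e_u` and
`N(G₂) z = y(u) e_w`; this forces `z(w) = y(u) =: t`, and `(y, z) ↦ (y - t a, z - t b, t)` is an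
isomorphism onto `ker N(G₁) × ker N(G₂) × 𝔽₂`.
-/

open Matrix

theorem Finset.sum_sum_eq_sum_diag_of_charTwo {R ι : Type*} [Ring R] [CharP R 2]
    (s : Finset ι) (f : ι → ι → R) (hf : ∀ i j, f i j = f j i) :
    ∑ i ∈ s, ∑ j ∈ s, f i j = ∑ i ∈ s, f i i := by
  induction s using Finset.induction_on with
  | empty => simp
  | insert a s ha ih =>
    simp only [Finset.sum_insert ha, Finset.sum_add_distrib, ih]
    rw [Finset.sum_congr rfl fun i _ => hf i a, add_assoc, ← add_assoc (s.sum (f a)),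
      CharTwo.add_self_eq_zero, zero_add]

theorem Matrix.IsSymm.dotProduct_mulVec_self {n : Type*} [Fintype n] {M : Matrix n n (ZMod 2)}
    (hM : M.IsSymm) (k : n → ZMod 2) : k ⬝ᵥ M *ᵥ k = M.diag ⬝ᵥ k := by
  simp only [dotProduct, mulVec, Finset.mul_sum]
  rw [Finset.sum_sum_eq_sum_diag_of_charTwo]
  · refine Finset.sum_congr rfl fun i _ => ?_
    rw [diag_apply]
    linear_combination M i i * ZMod.pow_card (k i)
  · intro i j
    rw [hM.apply i j]
    ring

theorem Matrix.mem_range_mulVecLin_transpose_iff {K m n : Type*} [Field K] [Fintype m]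
    [Fintype n] (M : Matrix m n K) (v : n → K) :
    v ∈ LinearMap.range Mᵀ.mulVecLin ↔ ∀ k ∈ LinearMap.ker M.mulVecLin, v ⬝ᵥ k = 0 := by
  have hdual (x : m → K) :
      dotProductEquiv K n (Mᵀ *ᵥ x) = M.mulVecLin.dualMap (dotProductEquiv K m x) := by
    refine LinearMap.ext fun y => ?_
    simp only [dotProductEquiv_apply_apply, LinearMap.dualMap_apply, mulVecLin_apply,
      mulVec_transpose, dotProduct_mulVec]
  have hrange : v ∈ LinearMap.range Mᵀ.mulVecLin ↔
      dotProductEquiv K n v ∈ LinearMap.range M.mulVecLin.dualMap := by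
    constructor
    · rintro ⟨x, rfl⟩
      exact ⟨_, (hdual x).symm⟩
    · rintro ⟨φ, hφ⟩
      refine ⟨(dotProductEquiv K m).symm φ, (dotProductEquiv K n).injective ?_⟩
      rw [mulVecLin_apply, hdual, LinearEquiv.apply_symm_apply, hφ]
  rw [hrange, LinearMap.range_dualMap_eq_dualAnnihilator_ker, Submodule.mem_dualAnnihilator]
  simp

theorem Matrix.IsSymm.exists_mulVec_eq {K n : Type*} [Field K] [Fintype n] {M : Matrix n n K}
    (hM : M.IsSymm) {v : n → K} (hv : ∀ k, M *ᵥ k = 0 → v ⬝ᵥ k = 0) : ∃ x, M *ᵥ x = v := by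
  have hrange := M.mem_range_mulVecLin_transpose_iff v
  rw [hM.eq] at hrange
  exact hrange.mpr fun k hk => hv k hk

section closedAdj

variable {V : Type*} [Fintype V] (G : SimpleGraph V)

noncomputable abbrev closedKer : Submodule (ZMod 2) (V → ZMod 2) :=
  LinearMap.ker (closedAdj G).mulVecLin

theorem nu_eq_finrank_closedKer : nu G = Module.finrank (ZMod 2) (closedKer G) := rfl

theorem closedAdj_isSymm : (closedAdj G).IsSymm := by
  ext i j
  simp [closedAdj, eq_comm, G.adj_comm]

theorem closedAdj_diag : (closedAdj G).diag = 1 := by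
  ext i
  simp [closedAdj]

theorem dotProduct_closedAdj_mulVec_self (k : V → ZMod 2) :
    k ⬝ᵥ closedAdj G *ᵥ k = 1 ⬝ᵥ k := by
  rw [(closedAdj_isSymm G).dotProduct_mulVec_self, closedAdj_diag]

/-- Sutner's theorem. -/
theorem exists_closedAdj_mulVec_eq_one : ∃ p, closedAdj G *ᵥ p = 1 :=
  (closedAdj_isSymm G).exists_mulVec_eq fun k hk => by
    rw [← dotProduct_closedAdj_mulVec_self, hk, dotProduct_zero]

end closedAdj

theorem sub_smul_mem_closedKer {V : Type*} [Fintype V] {G : SimpleGraph V} {u : V}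
    {a y : V → ZMod 2} {s : ZMod 2} (ha : closedAdj G *ᵥ a = Pi.single u 1)
    (hy : closedAdj G *ᵥ y = Pi.single u s) : y - s • a ∈ closedKer G := by
  rw [LinearMap.mem_ker, mulVecLin_apply, mulVec_sub, mulVec_smul, ha, hy, ← Pi.single_smul',
    smul_eq_mul, mul_one, sub_self]

def IsAlwaysActivated {V : Type*} [Fintype V] (G : SimpleGraph V) (u : V) : Prop :=
  ∀ p : V → ZMod 2, closedAdj G *ᵥ p = 1 → p u = 1

namespace IsAlwaysActivated

variable {V : Type*} [Fintype V] {G : SimpleGraph V} {u : V}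

theorem apply_eq_zero_of_closedAdj_mulVec_eq_zero (hu : IsAlwaysActivated G u)
    {k : V → ZMod 2} (hk : closedAdj G *ᵥ k = 0) : k u = 0 := by
  obtain ⟨p, hp⟩ := exists_closedAdj_mulVec_eq_one G
  have hpk : p u + k u = 1 := hu (p + k) (by rw [mulVec_add, hp, hk, add_zero])
  rwa [hu p hp, add_eq_left] at hpk

theorem exists_closedAdj_mulVec_eq_single (hu : IsAlwaysActivated G u) :
    ∃ a, closedAdj G *ᵥ a = Pi.single u 1 :=
  (closedAdj_isSymm G).exists_mulVec_eq fun k hk => by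
    rw [single_dotProduct, one_mul, hu.apply_eq_zero_of_closedAdj_mulVec_eq_zero hk]

theorem apply_eq_one_of_closedAdj_mulVec_eq_single (hu : IsAlwaysActivated G u)
    {a : V → ZMod 2} (ha : closedAdj G *ᵥ a = Pi.single u 1) : a u = 1 := by
  obtain ⟨p, hp⟩ := exists_closedAdj_mulVec_eq_one G
  calc a u = a ⬝ᵥ closedAdj G *ᵥ a := by rw [ha, dotProduct_single, mul_one]
    _ = closedAdj G *ᵥ p ⬝ᵥ a := by rw [dotProduct_closedAdj_mulVec_self, hp]
    _ = p ⬝ᵥ closedAdj G *ᵥ a := by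
      rw [dotProduct_mulVec, ← mulVec_transpose, (closedAdj_isSymm G).eq]
    _ = p u := by rw [ha, dotProduct_single, mul_one]
    _ = 1 := hu p hp

theorem apply_eq_of_closedAdj_mulVec_eq_single (hu : IsAlwaysActivated G u)
    {a y : V → ZMod 2} {s : ZMod 2} (ha : closedAdj G *ᵥ a = Pi.single u 1)
    (hy : closedAdj G *ᵥ y = Pi.single u s) : y u = s := by
  have h := hu.apply_eq_zero_of_closedAdj_mulVec_eq_zero (sub_smul_mem_closedKer ha hy)
  rwa [Pi.sub_apply, Pi.smul_apply, hu.apply_eq_one_of_closedAdj_mulVec_eq_single ha,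
    smul_eq_mul, mul_one, sub_eq_zero] at h

end IsAlwaysActivated

structure IsEdgeJoin {V₁ V₂ : Type*} (G₁ : SimpleGraph V₁) (G₂ : SimpleGraph V₂) (u : V₁)
    (w : V₂) (H : SimpleGraph (V₁ ⊕ V₂)) : Prop where
  adj_inl_inl : ∀ a b : V₁, H.Adj (.inl a) (.inl b) ↔ G₁.Adj a b
  adj_inr_inr : ∀ a b : V₂, H.Adj (.inr a) (.inr b) ↔ G₂.Adj a b
  adj_inl_inr : ∀ (a : V₁) (b : V₂), H.Adj (.inl a) (.inr b) ↔ a = u ∧ b = w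

section join

variable {V₁ V₂ R : Type*} [CommRing R]

def sumElimAddSMul (K₁ : Submodule R (V₁ → R)) (K₂ : Submodule R (V₂ → R)) (a : V₁ → R)
    (b : V₂ → R) : K₁ × K₂ × R →ₗ[R] (V₁ ⊕ V₂ → R) where
  toFun x := Sum.elim (x.1 + x.2.2 • a) (x.2.1 + x.2.2 • b)
  map_add' x y := by
    ext (i | i) <;> simp [add_smul] <;> ring
  map_smul' c x := by
    ext (i | i) <;> simp <;> ring

theorem sumElimAddSMul_injective {K₁ : Submodule R (V₁ → R)} {K₂ : Submodule R (V₂ → R)}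
    {a : V₁ → R} {b : V₂ → R} {u : V₁} (hK₁ : ∀ k ∈ K₁, k u = 0) (hau : a u = 1) :
    Function.Injective (sumElimAddSMul K₁ K₂ a b) := by
  rw [injective_iff_map_eq_zero]
  rintro ⟨k₁, k₂, t⟩ h
  have ht : t = 0 := by
    simpa [sumElimAddSMul, hK₁ k₁ k₁.2, hau] using congrFun h (.inl u)
  subst ht
  simp only [sumElimAddSMul, zero_smul, add_zero, LinearMap.coe_mk, AddHom.coe_mk] at h
  rw [← Sum.elim_zero_zero, Sum.elim_eq_iff] at h
  simp [Subtype.ext_iff, h.1, h.2]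

end join

namespace IsEdgeJoin

variable {V₁ V₂ : Type*} [Fintype V₁] [Fintype V₂] {G₁ : SimpleGraph V₁} {G₂ : SimpleGraph V₂}
  {u : V₁} {w : V₂} {H : SimpleGraph (V₁ ⊕ V₂)}

theorem closedAdj_eq_fromBlocks (hH : IsEdgeJoin G₁ G₂ u w H) :
    closedAdj H = fromBlocks (closedAdj G₁) (single u w 1) (single w u 1) (closedAdj G₂) := by
  ext (i | i) (j | j) <;>
    simp [closedAdj, single, hH.adj_inl_inl, hH.adj_inr_inr, hH.adj_inl_inr,
      H.adj_comm (.inr _), eq_comm, and_comm]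

theorem mem_ker_closedAdj_iff (hH : IsEdgeJoin G₁ G₂ u w H) (x : V₁ ⊕ V₂ → ZMod 2) :
    x ∈ closedKer H ↔
      closedAdj G₁ *ᵥ (x ∘ .inl) = Pi.single u (x (.inr w)) ∧
        closedAdj G₂ *ᵥ (x ∘ .inr) = Pi.single w (x (.inl u)) := by
  rw [LinearMap.mem_ker, mulVecLin_apply, hH.closedAdj_eq_fromBlocks, fromBlocks_mulVec,
    ← Sum.elim_zero_zero, Sum.elim_eq_iff, ← ZModModule.sub_eq_add, sub_eq_zero,
    ← ZModModule.sub_eq_add, sub_eq_zero, single_mulVec, single_mulVec, one_mul, one_mul]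
  exact and_congr Iff.rfl eq_comm

theorem range_sumElimAddSMul (hH : IsEdgeJoin G₁ G₂ u w H) (hu : IsAlwaysActivated G₁ u)
    (hw : IsAlwaysActivated G₂ w) {a : V₁ → ZMod 2} {b : V₂ → ZMod 2}
    (ha : closedAdj G₁ *ᵥ a = Pi.single u 1) (hb : closedAdj G₂ *ᵥ b = Pi.single w 1) :
    LinearMap.range (sumElimAddSMul (closedKer G₁) (closedKer G₂) a b) = closedKer H := by
  ext x
  rw [hH.mem_ker_closedAdj_iff]
  constructor
  · rintro ⟨⟨k₁, k₂, t⟩, rfl⟩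
    have hk₁ : closedAdj G₁ *ᵥ k₁ = 0 := LinearMap.mem_ker.mp k₁.2
    have hk₂ : closedAdj G₂ *ᵥ k₂ = 0 := LinearMap.mem_ker.mp k₂.2
    simp [sumElimAddSMul, mulVec_add, mulVec_smul, hk₁, hk₂, ha, hb,
      hu.apply_eq_zero_of_closedAdj_mulVec_eq_zero hk₁,
      hw.apply_eq_zero_of_closedAdj_mulVec_eq_zero hk₂,
      hu.apply_eq_one_of_closedAdj_mulVec_eq_single ha,
      hw.apply_eq_one_of_closedAdj_mulVec_eq_single hb, ← Pi.single_smul']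
  · rintro ⟨h₁, h₂⟩
    have hts : x (.inr w) = x (.inl u) :=
      (hu.apply_eq_of_closedAdj_mulVec_eq_single ha h₁).symm
    rw [hts] at h₁
    refine ⟨⟨⟨_, sub_smul_mem_closedKer ha h₁⟩,
      ⟨_, sub_smul_mem_closedKer hb h₂⟩, x (.inl u)⟩, ?_⟩
    ext (i | i) <;> simp [sumElimAddSMul]

end IsEdgeJoin

theorem nu_join_always_activated {V₁ V₂ : Type*} [Fintype V₁] [Fintype V₂]
    (G₁ : SimpleGraph V₁) (G₂ : SimpleGraph V₂) (u : V₁) (w : V₂)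
    (H : SimpleGraph (V₁ ⊕ V₂))
    (hll : ∀ a b : V₁, H.Adj (Sum.inl a) (Sum.inl b) ↔ G₁.Adj a b)
    (hrr : ∀ a b : V₂, H.Adj (Sum.inr a) (Sum.inr b) ↔ G₂.Adj a b)
    (hlr : ∀ (a : V₁) (b : V₂), H.Adj (Sum.inl a) (Sum.inr b) ↔ a = u ∧ b = w)
    (hu : ∀ p : V₁ → ZMod 2, (closedAdj G₁).mulVec p = 1 → p u = 1)
    (hw : ∀ p : V₂ → ZMod 2, (closedAdj G₂).mulVec p = 1 → p w = 1) :
    nu H = nu G₁ + nu G₂ + 1 := by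
  have hu : IsAlwaysActivated G₁ u := hu
  have hw : IsAlwaysActivated G₂ w := hw
  obtain ⟨a, ha⟩ := hu.exists_closedAdj_mulVec_eq_single
  obtain ⟨b, hb⟩ := hw.exists_closedAdj_mulVec_eq_single
  have hinj : Function.Injective (sumElimAddSMul (closedKer G₁) (closedKer G₂) a b) :=
    sumElimAddSMul_injective (fun _ hk => hu.apply_eq_zero_of_closedAdj_mulVec_eq_zero hk)
      (hu.apply_eq_one_of_closedAdj_mulVec_eq_single ha)
  simp only [nu_eq_finrank_closedKer]
  rw [← IsEdgeJoin.range_sumElimAddSMul ⟨hll, hrr, hlr⟩ hu hw ha hb,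
    LinearMap.finrank_range_of_inj hinj, Module.finrank_prod, Module.finrank_prod,
    Module.finrank_self, add_assoc]
end
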